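/- (Full high-energy expansion of the coefficient vector q, d=2; formula (4.14), refining Theorem 3.4 for d=2.) For every M ∈ ℕ there exist constants C > 0 and κ₀ > 1 such that for all κ ≥ κ₀ the matrix A(κ) is invertible and for all k ∈ ℝ² with |k| = κ and all j ∈ {1,…,n} one has |q_j(k) + 2π (ln κ)^{−1} Σ_{m=0}^M (−2π)^m (ln κ)^{−m} (α_j − i/4)^m e^{i k·y_j}| ≤ C (ln κ)^{−M−2}. In particular q_j(k) = −2π(ln κ)^{−1} e^{ik·y_j} + 4π²(ln κ)^{−2}(α_j − i/4) e^{ik·y_j} + O((ln κ)^{−3}) as κ → +∞. -/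

import Mathlib

open Complex Finset Matrix

noncomputable section

/-- The matrix `A(κ) = (ln κ/(2π)) I + Z + G(κ)` for a two-dimensional multipoint
potential, where `Z = diag(α_j - i/4)`. -/
def A2 (n : ℕ) (α : Fin n → ℂ) (G : ℝ → Matrix (Fin n) (Fin n) ℂ) (κ : ℝ) :
    Matrix (Fin n) (Fin n) ℂ :=
  ((Real.log κ / (2 * Real.pi) : ℝ) : ℂ) • (1 : Matrix (Fin n) (Fin n) ℂ) +
    Matrix.diagonal (fun j => α j - Complex.I / 4) + G κ

/-- `q(k) = A(κ)⁻¹ b(k)` with `b(k)_j = -e^{i k·y_j}`. -/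
def q2 (n : ℕ) (y : Fin n → EuclideanSpace ℝ (Fin 2)) (α : Fin n → ℂ)
    (G : ℝ → Matrix (Fin n) (Fin n) ℂ) (κ : ℝ) (k : EuclideanSpace ℝ (Fin 2)) :
    Fin n → ℂ :=
  (A2 n α G κ)⁻¹ *ᵥ fun j => -Complex.exp (Complex.I * (inner ℝ k (y j) : ℝ))

/-- The scattering amplitude `f(k,ℓ) = (2π)⁻² Σ_j q_j(k) e^{-iℓ·y_j}`. -/
def f2 (n : ℕ) (y : Fin n → EuclideanSpace ℝ (Fin 2)) (α : Fin n → ℂ)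
    (G : ℝ → Matrix (Fin n) (Fin n) ℂ) (κ : ℝ) (k ℓ : EuclideanSpace ℝ (Fin 2)) : ℂ :=
  ((2 * Real.pi : ℂ) ^ 2)⁻¹ *
    ∑ j, q2 n y α G κ k j * Complex.exp (-Complex.I * (inner ℝ ℓ (y j) : ℝ))

/-!
With `a = ln κ / (2π)` one has `A(κ) = D + G(κ)` for the diagonal matrix `D = diag(a + α_j - i/4)`.
Once `a` dominates `Z`, `‖D⁻¹‖ ≤ 2`, and a Neumann-series argument gives
`‖A(κ)⁻¹ - D⁻¹‖ ≤ 8 ‖G(κ)‖ = O(κ^{-1/2})`, which is `o((ln κ)^{-N})` for every `N`.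
The entries of `D⁻¹` are expanded by the geometric series
`(a + z)⁻¹ = Σ_{m ≤ M} (-z)^m / a^{m+1} + O(a^{-M-2})`, which is the stated expansion of `q_j`.
Matrices carry the `ℓ∞` operator norm (maximal row sum).
-/

open Filter

section NormedRing

variable {R : Type*} [NormedRing R] {u g : R}

theorem norm_ringInverse_add_sub_ringInverse_le_of_isUnit (hu : IsUnit u) (hug : IsUnit (u + g)) :
    ‖Ring.inverse (u + g) - Ring.inverse u‖ ≤ ‖Ring.inverse (u + g)‖ * ‖g‖ * ‖Ring.inverse u‖ := by
  rw [Ring.inverse_sub_inverse (iff_of_true hug hu), sub_add_cancel_left, mul_neg, neg_mul,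
    norm_neg]
  exact (norm_mul_le _ _).trans (by gcongr; exact norm_mul_le _ _)

variable [HasSummableGeomSeries R]

theorem IsUnit.add_of_norm_ringInverse_mul_lt_one (hu : IsUnit u)
    (h : ‖Ring.inverse u‖ * ‖g‖ < 1) : IsUnit (u + g) := by
  have hsmall : ‖-(Ring.inverse u * g)‖ < 1 :=
    (norm_neg _).trans_lt ((norm_mul_le _ _).trans_lt h)
  have hfac : u + g = u * (1 - -(Ring.inverse u * g)) := by
    rw [sub_neg_eq_add, mul_add, mul_one, ← mul_assoc, Ring.mul_inverse_cancel u hu, one_mul]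
  rw [hfac]
  exact hu.mul (isUnit_one_sub_of_norm_lt_one hsmall)

theorem norm_ringInverse_add_sub_ringInverse_le (hu : IsUnit u)
    (h : ‖Ring.inverse u‖ * ‖g‖ ≤ 1 / 2) :
    ‖Ring.inverse (u + g) - Ring.inverse u‖ ≤ 2 * ‖Ring.inverse u‖ ^ 2 * ‖g‖ := by
  have hug : IsUnit (u + g) := hu.add_of_norm_ringInverse_mul_lt_one (h.trans_lt (by norm_num))
  have hdiff := norm_ringInverse_add_sub_ringInverse_le_of_isUnit hu hug
  -- `‖w‖ ≤ ‖u⁻¹‖ + ‖w - u⁻¹‖ ≤ ‖u⁻¹‖ + ‖w‖ / 2` for `w = (u + g)⁻¹`, by `hdiff`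
  have hinv : ‖Ring.inverse (u + g)‖ ≤ 2 * ‖Ring.inverse u‖ := by
    have := norm_le_norm_add_norm_sub' (Ring.inverse (u + g)) (Ring.inverse u)
    nlinarith [norm_nonneg (Ring.inverse (u + g)), norm_nonneg g]
  calc _ ≤ ‖Ring.inverse (u + g)‖ * ‖g‖ * ‖Ring.inverse u‖ := hdiff
    _ ≤ 2 * ‖Ring.inverse u‖ * ‖g‖ * ‖Ring.inverse u‖ := by gcongr
    _ = _ := by ring

end NormedRing

theorem inv_add_sub_sum_eq {𝕜 : Type*} [Field 𝕜] {a z : 𝕜} (ha : a ≠ 0) (haz : a + z ≠ 0)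
    (N : ℕ) : (a + z)⁻¹ - ∑ m ∈ range N, (-z) ^ m / a ^ (m + 1) = (-z) ^ N / (a ^ N * (a + z)) := by
  induction N with
  | zero => simp
  | succ N ih =>
    rw [sum_range_succ, ← sub_sub, ih]
    field_simp
    ring

theorem norm_inv_add_sub_sum_le {𝕜 : Type*} [NormedField 𝕜] {a z : 𝕜} (ha : a ≠ 0)
    (hz : ‖z‖ ≤ ‖a‖ / 2) (N : ℕ) :
    ‖(a + z)⁻¹ - ∑ m ∈ range N, (-z) ^ m / a ^ (m + 1)‖ ≤ 2 * ‖z‖ ^ N / ‖a‖ ^ (N + 1) := by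
  have ha' : 0 < ‖a‖ := norm_pos_iff.mpr ha
  have haz : ‖a‖ / 2 ≤ ‖a + z‖ := by
    have := norm_sub_norm_le a (-z)
    rw [sub_neg_eq_add, norm_neg] at this
    linarith
  have haz0 : 0 < ‖a + z‖ := by linarith
  rw [inv_add_sub_sum_eq ha (norm_pos_iff.mp haz0), norm_div, norm_mul, norm_pow,
    norm_pow, norm_neg, div_le_div_iff₀ (by positivity) (by positivity)]
  calc ‖z‖ ^ N * ‖a‖ ^ (N + 1) = 2 * ‖z‖ ^ N * (‖a‖ ^ N * (‖a‖ / 2)) := by ring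
    _ ≤ 2 * ‖z‖ ^ N * (‖a‖ ^ N * ‖a + z‖) := by gcongr

theorem norm_inv_add_sub_log_expansion_le {L : ℝ} {z : ℂ} (hL : 0 < L)
    (hz : 2 * ‖z‖ ≤ L / (2 * Real.pi)) (M : ℕ) :
    ‖(((L / (2 * Real.pi) : ℝ) : ℂ) + z)⁻¹ -
        (2 * Real.pi : ℂ) / L * ∑ m ∈ range (M + 1), (-2 * Real.pi : ℂ) ^ m / (L : ℂ) ^ m * z ^ m‖ ≤
      2 * (2 * Real.pi) ^ (M + 2) * ‖z‖ ^ (M + 1) / L ^ (M + 2) := by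
  set a : ℝ := L / (2 * Real.pi) with ha_def
  have ha : 0 < a := by positivity
  have ha0 : (a : ℂ) ≠ 0 := by exact_mod_cast ha.ne'
  have hπ : (Real.pi : ℂ) ≠ 0 := by exact_mod_cast Real.pi_ne_zero
  have hLa : (L : ℂ) = a * (2 * Real.pi) := by
    push_cast [ha_def]
    field_simp
  have hsum : (2 * Real.pi : ℂ) / L *
        ∑ m ∈ range (M + 1), (-2 * Real.pi : ℂ) ^ m / (L : ℂ) ^ m * z ^ m =
      ∑ m ∈ range (M + 1), (-z) ^ m / (a : ℂ) ^ (m + 1) := by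
    rw [mul_sum]
    refine sum_congr rfl fun m _ => ?_
    rw [hLa, neg_mul, neg_pow, neg_pow z]
    field_simp
    ring
  have haz : ‖z‖ ≤ ‖(a : ℂ)‖ / 2 := by
    rw [Complex.norm_real, Real.norm_of_nonneg ha.le]
    linarith
  rw [hsum]
  refine (norm_inv_add_sub_sum_le ha0 haz (M + 1)).trans_eq ?_
  rw [Complex.norm_real, Real.norm_of_nonneg ha.le, ha_def, div_pow]
  field_simp

theorem eventually_log_pow_le_sqrt (N : ℕ) : ∀ᶠ x : ℝ in atTop, Real.log x ^ N ≤ Real.sqrt x := by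
  filter_upwards [(isLittleO_log_rpow_rpow_atTop (N : ℝ) one_half_pos).bound one_pos,
    eventually_ge_atTop 1] with x hx hx1
  rwa [Real.rpow_natCast, Real.norm_of_nonneg (pow_nonneg (Real.log_nonneg hx1) _),
    Real.norm_of_nonneg (Real.rpow_nonneg (by linarith) _), one_mul, ← Real.sqrt_eq_rpow] at hx

namespace Matrix

attribute [local instance] Matrix.linftyOpNormedAddCommGroup Matrix.linftyOpNormedRing
  Matrix.linftyOpNormedAlgebra

theorem linfty_opNorm_le_card_mul {m ι α : Type*} [Fintype m] [Fintype ι] [NormedAddCommGroup α]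
    {A : Matrix m ι α} {ε : ℝ} (hε : 0 ≤ ε) (h : ∀ i j, ‖A i j‖ ≤ ε) :
    ‖A‖ ≤ Fintype.card ι * ε := by
  lift ε to NNReal using hε
  have : ‖A‖₊ ≤ Fintype.card ι * ε := by
    rw [linfty_opNNNorm_def]
    refine Finset.sup_le fun i _ => ?_
    calc ∑ j, ‖A i j‖₊ ≤ ∑ _j : ι, ε := sum_le_sum fun j _ => h i j
      _ = Fintype.card ι * ε := by simp
  exact_mod_cast this

theorem linfty_opNorm_le_card_mul_of_diag_eq_zero {ι α : Type*} [Fintype ι] [NormedAddCommGroup α]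
    {A : Matrix ι ι α} {ε : ℝ} (hε : 0 ≤ ε) (hdiag : ∀ i, A i i = 0)
    (h : ∀ i j, i ≠ j → ‖A i j‖ ≤ ε) : ‖A‖ ≤ Fintype.card ι * ε := by
  refine linfty_opNorm_le_card_mul hε fun i j => ?_
  rcases eq_or_ne i j with rfl | hij
  · rwa [hdiag, norm_zero]
  · exact h i j hij

variable {ι : Type*} [Fintype ι] [DecidableEq ι]

theorem inv_diagonal_of_ne_zero {K : Type*} [Field K] {d : ι → K} (hd : ∀ i, d i ≠ 0) :
    (diagonal d)⁻¹ = diagonal fun i => (d i)⁻¹ :=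
  inv_eq_left_inv (by rw [diagonal_mul_diagonal]; simp [hd])

theorem norm_ringInverse_diagonal_le {K : Type*} [NormedField K] {d : ι → K} {r : ℝ} (hr : 0 < r)
    (hd : ∀ i, r ≤ ‖d i‖) :
    ‖Ring.inverse (diagonal d)‖ ≤ r⁻¹ := by
  have hd0 : ∀ i, d i ≠ 0 := fun i => norm_pos_iff.mp (hr.trans_le (hd i))
  rw [← nonsing_inv_eq_ringInverse, inv_diagonal_of_ne_zero hd0, linfty_opNorm_diagonal,
    pi_norm_le_iff_of_nonneg (by positivity)]
  intro i
  rw [norm_inv]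
  exact inv_anti₀ hr (hd i)

section Perturbation

variable {K : Type*} [RCLike K] {d : ι → K} {E : Matrix ι ι K} {r : ℝ}

theorem isUnit_diagonal_of_forall_le_norm (hr : 0 < r) (hd : ∀ i, r ≤ ‖d i‖) :
    IsUnit (diagonal d) :=
  isUnit_diagonal.mpr (Pi.isUnit_iff.mpr fun i => (norm_pos_iff.mp (hr.trans_le (hd i))).isUnit)

theorem norm_ringInverse_diagonal_mul_le_half (hr : 0 < r) (hd : ∀ i, r ≤ ‖d i‖)
    (hE : ‖E‖ ≤ r / 2) : ‖Ring.inverse (diagonal d)‖ * ‖E‖ ≤ 1 / 2 :=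
  calc _ ≤ r⁻¹ * (r / 2) := by gcongr; exact norm_ringInverse_diagonal_le hr hd
    _ = 1 / 2 := by field_simp

theorem isUnit_diagonal_add (hr : 0 < r) (hd : ∀ i, r ≤ ‖d i‖) (hE : ‖E‖ ≤ r / 2) :
    IsUnit (diagonal d + E) :=
  (isUnit_diagonal_of_forall_le_norm hr hd).add_of_norm_ringInverse_mul_lt_one
    ((norm_ringInverse_diagonal_mul_le_half hr hd hE).trans_lt (by norm_num))

theorem norm_inv_diagonal_add_mulVec_sub_le (hr : 0 < r) (hd : ∀ i, r ≤ ‖d i‖) (hE : ‖E‖ ≤ r / 2)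
    (b : ι → K) (i : ι) :
    ‖((diagonal d + E)⁻¹ *ᵥ b) i - (d i)⁻¹ * b i‖ ≤ 2 * ‖E‖ * ‖b‖ / r ^ 2 := by
  have hd0 : ∀ i, d i ≠ 0 := fun i => norm_pos_iff.mp (hr.trans_le (hd i))
  have hentry : ((diagonal d + E)⁻¹ *ᵥ b) i - (d i)⁻¹ * b i
      = ((Ring.inverse (diagonal d + E) - Ring.inverse (diagonal d)) *ᵥ b) i := by
    rw [← nonsing_inv_eq_ringInverse, ← nonsing_inv_eq_ringInverse, inv_diagonal_of_ne_zero hd0,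
      sub_mulVec, Pi.sub_apply, mulVec_diagonal]
  calc _ ≤ ‖(Ring.inverse (diagonal d + E) - Ring.inverse (diagonal d)) *ᵥ b‖ := by
        rw [hentry]; exact norm_le_pi_norm _ i
    _ ≤ 2 * ‖Ring.inverse (diagonal d)‖ ^ 2 * ‖E‖ * ‖b‖ := by
        refine (linfty_opNorm_mulVec _ _).trans ?_
        gcongr
        exact norm_ringInverse_add_sub_ringInverse_le (isUnit_diagonal_of_forall_le_norm hr hd)
          (norm_ringInverse_diagonal_mul_le_half hr hd hE)
    _ ≤ 2 * r⁻¹ ^ 2 * ‖E‖ * ‖b‖ := by gcongr; exact norm_ringInverse_diagonal_le hr hd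
    _ = _ := by ring

end Perturbation

end Matrix

def Z2 {n : ℕ} (α : Fin n → ℂ) : Fin n → ℂ := fun j => α j - Complex.I / 4

section Expansion

attribute [local instance] Matrix.linftyOpNormedAddCommGroup

variable {n : ℕ} {α : Fin n → ℂ} {G : ℝ → Matrix (Fin n) (Fin n) ℂ} {κ : ℝ}

theorem A2_eq_diagonal_add :
    A2 n α G κ = diagonal (fun j => ((Real.log κ / (2 * Real.pi) : ℝ) : ℂ) + Z2 α j) + G κ := by
  rw [A2, smul_one_eq_diagonal, diagonal_add]
  rfl

theorem one_half_le_norm_ofReal_add {a : ℝ} {z : ℂ} (ha : 1 ≤ a) (hz : 2 * ‖z‖ ≤ a) :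
    1 / 2 ≤ ‖(a : ℂ) + z‖ := by
  have := norm_sub_norm_le (a : ℂ) (-z)
  rw [sub_neg_eq_add, norm_neg, Complex.norm_real, Real.norm_of_nonneg (by linarith)] at this
  linarith

theorem isUnit_A2 (hL : 2 * Real.pi ≤ Real.log κ) (hZ : 2 * ‖Z2 α‖ ≤ Real.log κ / (2 * Real.pi))
    (hG : ‖G κ‖ ≤ 1 / 4) : IsUnit (A2 n α G κ) := by
  have ha : 1 ≤ Real.log κ / (2 * Real.pi) := (one_le_div (by positivity)).mpr hL
  rw [A2_eq_diagonal_add]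
  exact isUnit_diagonal_add one_half_pos
    (fun i => one_half_le_norm_ofReal_add ha (by linarith [norm_le_pi_norm (Z2 α) i]))
    (by linarith)

theorem norm_q2_add_expansion_le (y : Fin n → EuclideanSpace ℝ (Fin 2)) (M : ℕ)
    (hL : 2 * Real.pi ≤ Real.log κ) (hZ : 2 * ‖Z2 α‖ ≤ Real.log κ / (2 * Real.pi))
    (hG : ‖G κ‖ ≤ 1 / 4) (k : EuclideanSpace ℝ (Fin 2)) (j : Fin n) :
    ‖q2 n y α G κ k j +
        (2 * Real.pi : ℂ) / (Real.log κ : ℂ) *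
          ∑ m ∈ range (M + 1),
            (-2 * Real.pi : ℂ) ^ m / (Real.log κ : ℂ) ^ m *
              (Z2 α j ^ m * Complex.exp (Complex.I * (inner ℝ k (y j) : ℝ)))‖ ≤
      8 * ‖G κ‖ + 2 * (2 * Real.pi) ^ (M + 2) * ‖Z2 α‖ ^ (M + 1) / Real.log κ ^ (M + 2) := by
  set L := Real.log κ
  set a : ℝ := L / (2 * Real.pi)
  set e := Complex.exp (Complex.I * (inner ℝ k (y j) : ℝ))
  set b : Fin n → ℂ := fun i => -Complex.exp (Complex.I * (inner ℝ k (y i) : ℝ))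
  have ha : 1 ≤ a := (one_le_div (by positivity)).mpr hL
  have hL0 : 0 < L := by linarith [Real.pi_pos]
  have hperturb := norm_inv_diagonal_add_mulVec_sub_le one_half_pos
    (fun i => one_half_le_norm_ofReal_add ha (by linarith [norm_le_pi_norm (Z2 α) i]))
    (by linarith : ‖G κ‖ ≤ 1 / 2 / 2) b j
  rw [← A2_eq_diagonal_add] at hperturb
  have hb : ‖b‖ ≤ 1 := (pi_norm_le_iff_of_nonneg zero_le_one).mpr fun i => by
    rw [norm_neg, Complex.norm_exp_I_mul_ofReal]
  have hmatrix : 2 * ‖G κ‖ * ‖b‖ / (1 / 2) ^ 2 ≤ 8 * ‖G κ‖ :=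
    calc _ = 8 * ‖G κ‖ * ‖b‖ := by ring
      _ ≤ 8 * ‖G κ‖ := mul_le_of_le_one_right (by positivity) hb
  have hscalar := norm_inv_add_sub_log_expansion_le (z := Z2 α j) hL0
    (by linarith [norm_le_pi_norm (Z2 α) j]) M
  set S := (2 * Real.pi : ℂ) / L *
    ∑ m ∈ range (M + 1), (-2 * Real.pi : ℂ) ^ m / (L : ℂ) ^ m * Z2 α j ^ m
  have hsplit : q2 n y α G κ k j + (2 * Real.pi : ℂ) / (L : ℂ) *
        ∑ m ∈ range (M + 1), (-2 * Real.pi : ℂ) ^ m / (L : ℂ) ^ m * (Z2 α j ^ m * e) =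
      ((A2 n α G κ)⁻¹ *ᵥ b) j - ((a : ℂ) + Z2 α j)⁻¹ * b j - e * (((a : ℂ) + Z2 α j)⁻¹ - S) := by
    simp_rw [← mul_assoc, ← sum_mul]
    change ((A2 n α G κ)⁻¹ *ᵥ b) j + _ = _ - _ * -e - _
    ring
  rw [hsplit]
  calc _ ≤ ‖((A2 n α G κ)⁻¹ *ᵥ b) j - ((a : ℂ) + Z2 α j)⁻¹ * b j‖ +
        ‖e‖ * ‖((a : ℂ) + Z2 α j)⁻¹ - S‖ := (norm_sub_le _ _).trans_eq (by rw [norm_mul])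
    _ ≤ _ := by
      rw [Complex.norm_exp_I_mul_ofReal, one_mul]
      exact add_le_add (hperturb.trans hmatrix)
        (hscalar.trans (by gcongr; exact norm_le_pi_norm _ j))

theorem eventually_isUnit_A2_and_norm_q2_add_expansion_le (y : Fin n → EuclideanSpace ℝ (Fin 2))
    {c : ℝ} (hc : 0 < c) (hGdiag : ∀ κ : ℝ, 1 ≤ κ → ∀ j, G κ j j = 0)
    (hG : ∀ κ : ℝ, 1 ≤ κ → ∀ j j' : Fin n, j ≠ j' → ‖G κ j j'‖ ≤ c / Real.sqrt κ) (M : ℕ) :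
    ∃ C > 0, ∀ᶠ κ in atTop, IsUnit (A2 n α G κ) ∧
      ∀ (k : EuclideanSpace ℝ (Fin 2)) (j : Fin n),
        ‖q2 n y α G κ k j +
            (2 * Real.pi : ℂ) / (Real.log κ : ℂ) *
              ∑ m ∈ range (M + 1),
                (-2 * Real.pi : ℂ) ^ m / (Real.log κ : ℂ) ^ m *
                  (Z2 α j ^ m * Complex.exp (Complex.I * (inner ℝ k (y j) : ℝ)))‖ ≤
          C / Real.log κ ^ (M + 2) := by
  refine ⟨8 * (n * c) + 2 * (2 * Real.pi) ^ (M + 2) * (‖Z2 α‖ + 1) ^ (M + 1), by positivity, ?_⟩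
  filter_upwards [eventually_ge_atTop 1,
    Real.tendsto_log_atTop.eventually_ge_atTop (2 * Real.pi),
    Real.tendsto_log_atTop.eventually_ge_atTop (2 * ‖Z2 α‖ * (2 * Real.pi)),
    eventually_log_pow_le_sqrt (M + 2),
    Real.tendsto_sqrt_atTop.eventually_ge_atTop (4 * (n * c))] with κ hκ hL hLZ hLsqrt hsqrt
  have hL0 : 0 < Real.log κ := by linarith [Real.pi_pos]
  have hsqrt0 : 0 < Real.sqrt κ := Real.sqrt_pos.mpr (by linarith)
  have hGκ : ‖G κ‖ ≤ n * c / Real.sqrt κ := by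
    simpa [mul_div_assoc] using
      linfty_opNorm_le_card_mul_of_diag_eq_zero (by positivity) (hGdiag κ hκ) (hG κ hκ)
  have hG4 : ‖G κ‖ ≤ 1 / 4 := hGκ.trans <| by
    rw [div_le_iff₀ hsqrt0]
    linarith
  have hGL : ‖G κ‖ ≤ n * c / Real.log κ ^ (M + 2) :=
    hGκ.trans (div_le_div_of_nonneg_left (by positivity) (by positivity) hLsqrt)
  have hZ : 2 * ‖Z2 α‖ ≤ Real.log κ / (2 * Real.pi) := (le_div_iff₀ (by positivity)).mpr hLZ
  refine ⟨isUnit_A2 hL hZ hG4, fun k j => (norm_q2_add_expansion_le y M hL hZ hG4 k j).trans ?_⟩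
  rw [add_div]
  gcongr
  · rw [mul_div_assoc]
    linarith
  · linarith

end Expansion

theorem stmt7_general (n : ℕ) (y : Fin n → EuclideanSpace ℝ (Fin 2)) (α : Fin n → ℂ)
    (G : ℝ → Matrix (Fin n) (Fin n) ℂ)
    (hGdiag : ∀ κ : ℝ, 1 ≤ κ → ∀ j, G κ j j = 0)
    (c : ℝ) (hc : 0 < c)
    (hG : ∀ κ : ℝ, 1 ≤ κ → ∀ j j' : Fin n, j ≠ j' → ‖G κ j j'‖ ≤ c / Real.sqrt κ) :
    (∀ M : ℕ, ∃ C > (0 : ℝ), ∃ κ₀ > (1 : ℝ), ∀ κ ≥ κ₀, IsUnit (A2 n α G κ) ∧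
      ∀ k : EuclideanSpace ℝ (Fin 2), ‖k‖ = κ → ∀ j : Fin n,
        ‖q2 n y α G κ k j +
            (2 * Real.pi : ℂ) / (Real.log κ : ℂ) *
              ∑ m ∈ Finset.range (M + 1),
                (-2 * Real.pi : ℂ) ^ m / (Real.log κ : ℂ) ^ m *
                  ((α j - Complex.I / 4) ^ m *
                    Complex.exp (Complex.I * (inner ℝ k (y j) : ℝ)))‖ ≤
          C / (Real.log κ) ^ (M + 2)) ∧
    (∃ C > (0 : ℝ), ∃ κ₀ > (1 : ℝ), ∀ κ ≥ κ₀, IsUnit (A2 n α G κ) ∧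
      ∀ k : EuclideanSpace ℝ (Fin 2), ‖k‖ = κ → ∀ j : Fin n,
        ‖q2 n y α G κ k j +
            (2 * Real.pi : ℂ) / (Real.log κ : ℂ) *
              Complex.exp (Complex.I * (inner ℝ k (y j) : ℝ)) -
            (4 * Real.pi ^ 2 : ℂ) / (Real.log κ : ℂ) ^ 2 *
              ((α j - Complex.I / 4) *
                Complex.exp (Complex.I * (inner ℝ k (y j) : ℝ)))‖ ≤
          C / (Real.log κ) ^ 3) := by
  refine (fun hexp => ⟨hexp, ?_⟩) fun M => ?_
  · obtain ⟨C, hC, hev⟩ :=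
      eventually_isUnit_A2_and_norm_q2_add_expansion_le (α := α) y hc hGdiag hG M
    obtain ⟨κ₀, h⟩ := (hev.and (eventually_gt_atTop 1)).exists_forall_of_atTop
    exact ⟨C, hC, κ₀, (h κ₀ le_rfl).2, fun κ hκ => ⟨(h κ hκ).1.1, fun k _ j => (h κ hκ).1.2 k j⟩⟩
  · obtain ⟨C, hC, κ₀, hκ₀, h⟩ := hexp 1
    refine ⟨C, hC, κ₀, hκ₀, fun κ hκ => ⟨(h κ hκ).1, fun k hk j => ?_⟩⟩
    convert (h κ hκ).2 k hk j using 2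
    simp only [sum_range_succ, sum_range_zero]
    ring

/-- Full high-energy expansion of the coefficient vector q, d = 2 (formula (4.14)),
together with its leading-order particular case. -/
theorem stmt7 (n : ℕ) (y : Fin n → EuclideanSpace ℝ (Fin 2)) (α : Fin n → ℂ)
    (hy : Function.Injective y)
    (G : ℝ → Matrix (Fin n) (Fin n) ℂ)
    (hGdiag : ∀ κ : ℝ, 1 ≤ κ → ∀ j, G κ j j = 0)
    (c : ℝ) (hc : 0 < c)
    (hG : ∀ κ : ℝ, 1 ≤ κ → ∀ j j' : Fin n, j ≠ j' → ‖G κ j j'‖ ≤ c / Real.sqrt κ) :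
    (∀ M : ℕ, ∃ C > (0 : ℝ), ∃ κ₀ > (1 : ℝ), ∀ κ ≥ κ₀, IsUnit (A2 n α G κ) ∧
      ∀ k : EuclideanSpace ℝ (Fin 2), ‖k‖ = κ → ∀ j : Fin n,
        ‖q2 n y α G κ k j +
            (2 * Real.pi : ℂ) / (Real.log κ : ℂ) *
              ∑ m ∈ Finset.range (M + 1),
                (-2 * Real.pi : ℂ) ^ m / (Real.log κ : ℂ) ^ m *
                  ((α j - Complex.I / 4) ^ m *
                    Complex.exp (Complex.I * (inner ℝ k (y j) : ℝ)))‖ ≤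
          C / (Real.log κ) ^ (M + 2)) ∧
    (∃ C > (0 : ℝ), ∃ κ₀ > (1 : ℝ), ∀ κ ≥ κ₀, IsUnit (A2 n α G κ) ∧
      ∀ k : EuclideanSpace ℝ (Fin 2), ‖k‖ = κ → ∀ j : Fin n,
        ‖q2 n y α G κ k j +
            (2 * Real.pi : ℂ) / (Real.log κ : ℂ) *
              Complex.exp (Complex.I * (inner ℝ k (y j) : ℝ)) -
            (4 * Real.pi ^ 2 : ℂ) / (Real.log κ : ℂ) ^ 2 *
              ((α j - Complex.I / 4) *
                Complex.exp (Complex.I * (inner ℝ k (y j) : ℝ)))‖ ≤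
          C / (Real.log κ) ^ 3) :=
  stmt7_general n y α G hGdiag c hc hG
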